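/- LEMMA (negative correlation of activation and matching events in greedy): for arbitrary activation probabilities p : E → [0,1], let u be a vertex, i a neighbor of u, and j a vertex with j ≠ i. Then the event that the edge (ui) is active and the event that the greedy process matches u to j are negatively correlated: P(u is matched to j and (ui) is active) ≤ P(u is matched to j) · P((ui) is active). Equivalently, P((ui) is not active | u is matched to j) ≥ P((ui) is not active) whenever P(u is matched to j) > 0. -/
import Mathlib


open Finset

/-- `touches e v` says that vertex `v` is an endpoint of the edge `e`. -/
def touches {V : Type*} (e : V × V) (v : V) : Prop :=
  e.1 = v ∨ e.2 = v

open Classical in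
/-- The greedy matching process on edges `ends 0, ends 1, …, ends (m-1)` (arriving in
this order) with activation pattern `ω`: `greedyUpTo ends ω k` is the set of (indices of)
edges matched after the first `k` edges have been processed.  An arriving edge is matched
iff it is active and both of its endpoints are currently unmatched. -/
noncomputable def greedyUpTo {V : Type*} {m : ℕ} (ends : Fin m → V × V)
    (ω : Fin m → Bool) : ℕ → Finset (Fin m)
  | 0 => ∅
  | k + 1 =>
    if h : k < m then
      if ω ⟨k, h⟩ = true ∧
          (∀ j ∈ greedyUpTo ends ω k,
            ¬ touches (ends j) (ends ⟨k, h⟩).1 ∧ ¬ touches (ends j) (ends ⟨k, h⟩).2)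
      then insert ⟨k, h⟩ (greedyUpTo ends ω k) else greedyUpTo ends ω k
    else greedyUpTo ends ω k

open Classical in
/-- Probability of the event `P` under the (finitely supported) mass function `mass`. -/
noncomputable def prOf {Ω : Type*} [Fintype Ω] (mass : Ω → ℝ) (P : Ω → Prop) : ℝ :=
  ∑ ω, if P ω then mass ω else 0

/-- Product Bernoulli mass on activation patterns: coordinate `i` is `true` with
probability `p i`, independently across edges. -/
noncomputable def massP {m : ℕ} (p : Fin m → ℝ) (ω : Fin m → Bool) : ℝ :=
  ∏ i, if ω i then p i else 1 - p i

/-- The event `F_e`: both endpoints of edge `i` are unmatched just before `i` is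
processed by the greedy process. -/
def freeAt {V : Type*} {m : ℕ} (ends : Fin m → V × V) (ω : Fin m → Bool) (i : Fin m) :
    Prop :=
  ∀ j ∈ greedyUpTo ends ω i.1,
    ¬ touches (ends j) (ends i).1 ∧ ¬ touches (ends j) (ends i).2

/-- The event that edge `i` ends up matched by the greedy process. -/
def matchedEdge {V : Type*} {m : ℕ} (ends : Fin m → V × V) (ω : Fin m → Bool)
    (i : Fin m) : Prop :=
  i ∈ greedyUpTo ends ω m

/-- The `c`-fixed-point condition at edge `i`:
`p i * P(F_i) = c * x i`, i.e. the greedy process matches edge `i` with probability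
exactly `c * x i`. -/
def fixedPt {V : Type*} {m : ℕ} (ends : Fin m → V × V) (x p : Fin m → ℝ) (c : ℝ)
    (i : Fin m) : Prop :=
  p i * prOf (massP p) (fun ω => freeAt ends ω i) = c * x i

section Aux
variable {V : Type*} {m : ℕ} (ends : Fin m → V × V)

lemma greedy_succ_pos (ω : Fin m → Bool) {n : ℕ} (h : n < m)
    (hc : ω ⟨n, h⟩ = true ∧ (∀ j ∈ greedyUpTo ends ω n,
      ¬ touches (ends j) (ends ⟨n, h⟩).1 ∧ ¬ touches (ends j) (ends ⟨n, h⟩).2)) :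
    greedyUpTo ends ω (n+1) = insert ⟨n, h⟩ (greedyUpTo ends ω n) := by
  rw [greedyUpTo, dif_pos h, if_pos hc]

lemma greedy_succ_neg (ω : Fin m → Bool) {n : ℕ} (h : n < m)
    (hc : ¬ (ω ⟨n, h⟩ = true ∧ (∀ j ∈ greedyUpTo ends ω n,
      ¬ touches (ends j) (ends ⟨n, h⟩).1 ∧ ¬ touches (ends j) (ends ⟨n, h⟩).2))) :
    greedyUpTo ends ω (n+1) = greedyUpTo ends ω n := by
  rw [greedyUpTo, dif_pos h, if_neg hc]

lemma greedy_succ_ge (ω : Fin m → Bool) {n : ℕ} (h : ¬ n < m) :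
    greedyUpTo ends ω (n+1) = greedyUpTo ends ω n := by
  rw [greedyUpTo, dif_neg h]

lemma mem_greedy_lt (ω : Fin m → Bool) {n : ℕ} {k : Fin m}
    (hk : k ∈ greedyUpTo ends ω n) : k.1 < n := by
  induction n with
  | zero => simp [greedyUpTo] at hk
  | succ n ih =>
    by_cases h : n < m
    · by_cases hc : ω ⟨n, h⟩ = true ∧ (∀ j ∈ greedyUpTo ends ω n,
        ¬ touches (ends j) (ends ⟨n, h⟩).1 ∧ ¬ touches (ends j) (ends ⟨n, h⟩).2)
      · rw [greedy_succ_pos ends ω h hc] at hk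
        rcases Finset.mem_insert.1 hk with rfl | hk
        · exact Nat.lt_succ_self n
        · exact Nat.lt_succ_of_lt (ih hk)
      · rw [greedy_succ_neg ends ω h hc] at hk
        exact Nat.lt_succ_of_lt (ih hk)
    · rw [greedy_succ_ge ends ω h] at hk
      exact Nat.lt_succ_of_lt (ih hk)

lemma greedy_mono (ω : Fin m → Bool) : Monotone (greedyUpTo ends ω) := by
  apply monotone_nat_of_le_succ
  intro n
  by_cases h : n < m
  · by_cases hc : ω ⟨n, h⟩ = true ∧ (∀ j ∈ greedyUpTo ends ω n,
      ¬ touches (ends j) (ends ⟨n, h⟩).1 ∧ ¬ touches (ends j) (ends ⟨n, h⟩).2)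
    · rw [greedy_succ_pos ends ω h hc]; exact Finset.subset_insert _ _
    · rw [greedy_succ_neg ends ω h hc]
  · rw [greedy_succ_ge ends ω h]

lemma greedy_cond (ω : Fin m → Bool) {n : ℕ} {k : Fin m}
    (hk : k ∈ greedyUpTo ends ω n) :
    ω k = true ∧ (∀ j ∈ greedyUpTo ends ω k.1,
      ¬ touches (ends j) (ends k).1 ∧ ¬ touches (ends j) (ends k).2) := by
  induction n with
  | zero => simp [greedyUpTo] at hk
  | succ n ih =>
    by_cases h : n < m
    · by_cases hc : ω ⟨n, h⟩ = true ∧ (∀ j ∈ greedyUpTo ends ω n,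
        ¬ touches (ends j) (ends ⟨n, h⟩).1 ∧ ¬ touches (ends j) (ends ⟨n, h⟩).2)
      · rw [greedy_succ_pos ends ω h hc] at hk
        rcases Finset.mem_insert.1 hk with rfl | hk
        · exact hc
        · exact ih hk
      · rw [greedy_succ_neg ends ω h hc] at hk; exact ih hk
    · rw [greedy_succ_ge ends ω h] at hk; exact ih hk

lemma mem_greedy_self (ω : Fin m → Bool) {n : ℕ} {k : Fin m}
    (hk : k ∈ greedyUpTo ends ω n) : k ∈ greedyUpTo ends ω (k.1 + 1) := by
  induction n with
  | zero => simp [greedyUpTo] at hk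
  | succ n ih =>
    by_cases h : n < m
    · by_cases hc : ω ⟨n, h⟩ = true ∧ (∀ j ∈ greedyUpTo ends ω n,
        ¬ touches (ends j) (ends ⟨n, h⟩).1 ∧ ¬ touches (ends j) (ends ⟨n, h⟩).2)
      · rw [greedy_succ_pos ends ω h hc] at hk
        rcases Finset.mem_insert.1 hk with rfl | hk
        · rw [greedy_succ_pos ends ω h hc]; exact Finset.mem_insert_self _ _
        · exact ih hk
      · rw [greedy_succ_neg ends ω h hc] at hk; exact ih hk
    · rw [greedy_succ_ge ends ω h] at hk; exact ih hk

/-- The greedy set is a matching: no two edges in it share a vertex. -/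
lemma greedy_no_share (ω : Fin m → Bool) {n : ℕ} {k1 k2 : Fin m} {v : V}
    (h1 : k1 ∈ greedyUpTo ends ω n) (h2 : k2 ∈ greedyUpTo ends ω n)
    (hne : k1 ≠ k2) (t1 : touches (ends k1) v) (t2 : touches (ends k2) v) : False := by
  wlog hlt : (k1 : ℕ) < (k2 : ℕ) generalizing k1 k2
  · have hlt' : (k2 : ℕ) < (k1 : ℕ) := by
      rcases Nat.lt_trichotomy (k1 : ℕ) (k2 : ℕ) with h | h | h
      · exact absurd h hlt
      · exact absurd (Fin.ext h) hne
      · exact h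
    exact this h2 h1 hne.symm t2 t1 hlt'
  have h1' : k1 ∈ greedyUpTo ends ω k2.1 :=
    greedy_mono ends ω (Nat.succ_le_of_lt hlt) (mem_greedy_self ends ω h1)
  have := (greedy_cond ends ω h2).2 k1 h1'
  rcases t2 with h | h
  · exact this.1 (h ▸ t1)
  · exact this.2 (h ▸ t1)

lemma greedy_congr_below {ω ω' : Fin m → Bool} {n : ℕ}
    (hag : ∀ k : Fin m, (k : ℕ) < n → ω k = ω' k) :
    greedyUpTo ends ω n = greedyUpTo ends ω' n := by
  induction n with
  | zero => rfl
  | succ n ih =>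
    have ih' := ih (fun k hk => hag k (Nat.lt_succ_of_lt hk))
    by_cases h : n < m
    · have hωeq : ω ⟨n, h⟩ = ω' ⟨n, h⟩ := hag ⟨n, h⟩ (Nat.lt_succ_self n)
      by_cases hc : ω ⟨n, h⟩ = true ∧ (∀ j ∈ greedyUpTo ends ω n,
        ¬ touches (ends j) (ends ⟨n, h⟩).1 ∧ ¬ touches (ends j) (ends ⟨n, h⟩).2)
      · rw [greedy_succ_pos ends ω h hc, greedy_succ_pos ends ω' h
          ⟨hωeq ▸ hc.1, ih' ▸ hc.2⟩, ih']
      · rw [greedy_succ_neg ends ω h hc, greedy_succ_neg ends ω' h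
          (by rw [← hωeq, ← ih']; exact hc), ih']
    · rw [greedy_succ_ge ends ω h, greedy_succ_ge ends ω' h, ih']

lemma freeAt_congr_below {ω ω' : Fin m → Bool} {k0 : Fin m}
    (hag : ∀ k : Fin m, (k : ℕ) < (k0 : ℕ) → ω k = ω' k) :
    freeAt ends ω k0 ↔ freeAt ends ω' k0 := by
  unfold freeAt
  rw [greedy_congr_below ends hag]

/-- If edge `k0` is blocked at its arrival, flipping its activation does not change
the run of the greedy process. -/
lemma greedy_update_of_not_free {ω : Fin m → Bool} {k0 : Fin m}
    (hnf : ¬ freeAt ends ω k0) (b : Bool) (n : ℕ) :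
    greedyUpTo ends (Function.update ω k0 b) n = greedyUpTo ends ω n := by
  induction n with
  | zero => rfl
  | succ n ih =>
    set ω' := Function.update ω k0 b with hω'
    by_cases h : n < m
    · by_cases hk : (⟨n, h⟩ : Fin m) = k0
      · -- at k0's step, the condition fails for both since k0 is blocked
        have hfail : ∀ (ρ : Fin m → Bool), greedyUpTo ends ρ n = greedyUpTo ends ω n →
            ¬ (ρ ⟨n, h⟩ = true ∧ (∀ j ∈ greedyUpTo ends ρ n,
              ¬ touches (ends j) (ends ⟨n, h⟩).1 ∧ ¬ touches (ends j) (ends ⟨n, h⟩).2)) := by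
          intro ρ hρ hc
          apply hnf
          intro j hj
          rw [← hk]
          have : j ∈ greedyUpTo ends ρ n := by
            rw [hρ]
            rw [← hk] at hj
            exact hj
          exact hc.2 j this
        rw [greedy_succ_neg ends ω' h (hfail ω' ih),
          greedy_succ_neg ends ω h (hfail ω rfl), ih]
      · have hωeq : ω' ⟨n, h⟩ = ω ⟨n, h⟩ := Function.update_of_ne hk b ω
        by_cases hc : ω ⟨n, h⟩ = true ∧ (∀ j ∈ greedyUpTo ends ω n,
          ¬ touches (ends j) (ends ⟨n, h⟩).1 ∧ ¬ touches (ends j) (ends ⟨n, h⟩).2)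
        · rw [greedy_succ_pos ends ω h hc, greedy_succ_pos ends ω' h
            ⟨hωeq ▸ hc.1, ih ▸ hc.2⟩, ih]
        · rw [greedy_succ_neg ends ω h hc, greedy_succ_neg ends ω' h
            (by rw [hωeq, ih]; exact hc), ih]
    · rw [greedy_succ_ge ends ω' h, greedy_succ_ge ends ω h, ih]

end Aux

section Prob
variable {m : ℕ}

lemma massP_nonneg {p : Fin m → ℝ} (hp : ∀ i, 0 ≤ p i ∧ p i ≤ 1) (ω : Fin m → Bool) :
    0 ≤ massP p ω := by
  apply Finset.prod_nonneg
  intro i _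
  by_cases h : ω i <;> simp [h, (hp i).1, sub_nonneg.2 (hp i).2]

lemma prOf_congr {Ω : Type*} [Fintype Ω] (mass : Ω → ℝ) {P Q : Ω → Prop}
    (h : ∀ ω, P ω ↔ Q ω) : prOf mass P = prOf mass Q := by
  unfold prOf
  apply Finset.sum_congr rfl
  intro ω _
  by_cases hq : Q ω
  · rw [if_pos ((h ω).2 hq), if_pos hq]
  · rw [if_neg (fun hp => hq ((h ω).1 hp)), if_neg hq]

lemma prOf_mono {Ω : Type*} [Fintype Ω] {mass : Ω → ℝ} (hm : ∀ ω, 0 ≤ mass ω)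
    {P Q : Ω → Prop} (h : ∀ ω, P ω → Q ω) : prOf mass P ≤ prOf mass Q := by
  unfold prOf
  apply Finset.sum_le_sum
  intro ω _
  by_cases hp : P ω
  · rw [if_pos hp, if_pos (h ω hp)]
  · rw [if_neg hp]
    by_cases hq : Q ω
    · rw [if_pos hq]; exact hm ω
    · rw [if_neg hq]

lemma massP_total (p : Fin m → ℝ) : ∑ ω : Fin m → Bool, massP p ω = 1 := by
  unfold massP
  rw [← Fintype.prod_sum (fun (i : Fin m) (b : Bool) => if b then p i else 1 - p i)]
  rw [Finset.prod_eq_one]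
  intro i _
  simp [Fintype.sum_bool]

/-- The flip-at-`k0` involution of activation patterns. -/
noncomputable def flipAt (k0 : Fin m) : Equiv.Perm (Fin m → Bool) :=
  Function.Involutive.toPerm (fun ω => Function.update ω k0 (!ω k0)) (by
    intro ω
    funext i
    by_cases h : i = k0
    · subst h; simp
    · simp [Function.update_of_ne h])

lemma massP_update (p : Fin m → ℝ) (ω : Fin m → Bool) (k0 : Fin m) (b : Bool) :
    massP p (Function.update ω k0 b) =
      (if b then p k0 else 1 - p k0) *
        ∏ i ∈ Finset.univ.erase k0, (if ω i then p i else 1 - p i) := by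
  unfold massP
  rw [← Finset.mul_prod_erase Finset.univ _ (Finset.mem_univ k0)]
  congr 1
  · simp
  · apply Finset.prod_congr rfl
    intro i hi
    rw [Function.update_of_ne (Finset.ne_of_mem_erase hi)]

lemma massP_eq (p : Fin m → ℝ) (ω : Fin m → Bool) (k0 : Fin m) :
    massP p ω = (if ω k0 then p k0 else 1 - p k0) *
        ∏ i ∈ Finset.univ.erase k0, (if ω i then p i else 1 - p i) := by
  have := massP_update p ω k0 (ω k0)
  rwa [Function.update_eq_self] at this

/-- Key independence lemma: if the event `P` does not depend on coordinate `k0`, then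
`P ∧ {ω k0 = true}` factorizes. -/
lemma prOf_indep (p : Fin m → ℝ) (k0 : Fin m) (P : (Fin m → Bool) → Prop)
    (hP : ∀ ω b, P (Function.update ω k0 b) ↔ P ω) :
    prOf (massP p) (fun ω => P ω ∧ ω k0 = true) = p k0 * prOf (massP p) P := by
  classical
  have hsplit : prOf (massP p) P = prOf (massP p) (fun ω => P ω ∧ ω k0 = true)
      + prOf (massP p) (fun ω => P ω ∧ ω k0 = false) := by
    unfold prOf
    rw [← Finset.sum_add_distrib]
    apply Finset.sum_congr rfl
    intro ω _
    by_cases hp' : P ω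
    · cases hb : ω k0 <;> simp [hp', hb]
    · simp [hp']
  have key : (1 - p k0) * prOf (massP p) (fun ω => P ω ∧ ω k0 = true)
      = p k0 * prOf (massP p) (fun ω => P ω ∧ ω k0 = false) := by
    unfold prOf
    beta_reduce
    rw [Finset.mul_sum]
    trans (∑ ω : Fin m → Bool,
        if P ((flipAt k0) ω) ∧ (flipAt k0) ω k0 = false then p k0 * massP p ((flipAt k0) ω)
        else 0)
    · apply Finset.sum_congr rfl
      intro ω _
      have hflip : flipAt k0 ω = Function.update ω k0 (!ω k0) := rfl
      by_cases hc : P ω ∧ ω k0 = true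
      · rw [if_pos hc]
        rw [if_pos (by
          constructor
          · rw [hflip]; exact (hP ω (!ω k0)).2 hc.1
          · rw [hflip]; simp [hc.2])]
        rw [hflip, hc.2]
        simp only [Bool.not_true]
        rw [massP_update p ω k0 false, massP_eq p ω k0, hc.2]
        simp only [if_true, Bool.false_eq_true, if_false]
        ring
      · rw [if_neg hc, if_neg (by
          rw [hflip]
          rintro ⟨h1, h2⟩
          apply hc
          constructor
          · exact (hP ω (!ω k0)).1 h1
          · simp only [Function.update_self] at h2
            cases hb : ω k0
            · rw [hb] at h2; simp at h2
            · rfl)]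
        exact mul_zero _
    trans (∑ ρ : Fin m → Bool, if P ρ ∧ ρ k0 = false then p k0 * massP p ρ else 0)
    · exact Equiv.sum_comp (flipAt k0)
        (fun ρ => if P ρ ∧ ρ k0 = false then p k0 * massP p ρ else 0)
    rw [Finset.mul_sum]
    exact Finset.sum_congr rfl (fun ω _ => by
      by_cases hc : P ω ∧ ω k0 = false <;> simp [hc])
  rw [hsplit]
  linear_combination key

lemma prOf_coord (p : Fin m → ℝ) (k0 : Fin m) :
    prOf (massP p) (fun ω => ω k0 = true) = p k0 := by
  have := prOf_indep p k0 (fun _ => True) (fun _ _ => Iff.rfl)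
  simp only [true_and] at this
  rw [this]
  have : prOf (massP p) (fun _ : Fin m → Bool => True) = 1 := by
    unfold prOf
    simp only [if_true]
    exact massP_total p
  rw [this, mul_one]

end Prob

open Classical in
/-- Negative correlation of activation and matching events in the greedy process
(Lemma 5.3 in the paper): for arbitrary activation probabilities `p : E → [0,1]`, a vertex
`u`, a neighbour `i` of `u` (via the edge with index `k0`), and a vertex `j ≠ i`, the
event that edge `(u,i)` is active and the event that the greedy process matches `u` to `j`
are negatively correlated:
`P(u matched to j ∧ (u,i) active) ≤ P(u matched to j) * P((u,i) active)`. -/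
theorem negative_correlation_greedy {V : Type*} {m : ℕ}
    (ends : Fin m → V × V)
    (hsimple : ∀ i, (ends i).1 ≠ (ends i).2)
    (hdist : ∀ i j : Fin m, i ≠ j →
      ¬(((ends i).1 = (ends j).1 ∧ (ends i).2 = (ends j).2) ∨
        ((ends i).1 = (ends j).2 ∧ (ends i).2 = (ends j).1)))
    (p : Fin m → ℝ) (hp : ∀ i, 0 ≤ p i ∧ p i ≤ 1)
    (u i j : V) (hij : j ≠ i)
    (k0 : Fin m) (hk0 : ends k0 = (u, i) ∨ ends k0 = (i, u)) :
    prOf (massP p) (fun ω =>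
        (∃ k ∈ greedyUpTo ends ω m, ends k = (u, j) ∨ ends k = (j, u)) ∧ ω k0 = true)
      ≤ prOf (massP p) (fun ω =>
            ∃ k ∈ greedyUpTo ends ω m, ends k = (u, j) ∨ ends k = (j, u))
        * prOf (massP p) (fun ω => ω k0 = true) := by
  classical
  have htk0 : touches (ends k0) u := by
    rcases hk0 with h | h <;> simp [touches, h]
  -- Claim 1: on the event `ω k0 = true`, matching `u` to `j` forces `k0` to be blocked.
  have claim1 : ∀ ω : Fin m → Bool,
      ((∃ k ∈ greedyUpTo ends ω m, ends k = (u, j) ∨ ends k = (j, u)) ∧ ω k0 = true) ↔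
      (((∃ k ∈ greedyUpTo ends ω m, ends k = (u, j) ∨ ends k = (j, u)) ∧
          ¬ freeAt ends ω k0) ∧ ω k0 = true) := by
    intro ω
    constructor
    · rintro ⟨hM, hωk0⟩
      refine ⟨⟨hM, ?_⟩, hωk0⟩
      intro hfree
      have hins : greedyUpTo ends ω ((k0 : ℕ) + 1)
          = insert k0 (greedyUpTo ends ω (k0 : ℕ)) :=
        greedy_succ_pos ends ω k0.isLt ⟨hωk0, hfree⟩
      have hk0mem : k0 ∈ greedyUpTo ends ω m := by
        apply greedy_mono ends ω (Nat.succ_le_of_lt k0.isLt)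
        rw [hins]
        exact Finset.mem_insert_self _ _
      obtain ⟨k, hkmem, hkedge⟩ := hM
      have htk : touches (ends k) u := by
        rcases hkedge with h | h <;> simp [touches, h]
      have hkne : k ≠ k0 := by
        rintro rfl
        rcases hkedge with h | h <;> rcases hk0 with h0 | h0 <;>
          rw [h0] at h <;> rw [Prod.mk.injEq] at h
        · exact hij h.2.symm
        · exact hij (h.2.symm.trans h.1.symm)
        · exact hij (h.1.symm.trans h.2.symm)
        · exact hij h.1.symm
      exact greedy_no_share ends ω hkmem hk0mem hkne htk htk0
    · rintro ⟨⟨hM, _⟩, hωk0⟩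
      exact ⟨hM, hωk0⟩
  -- Claim 2: the event `matched to j ∧ k0 blocked` does not depend on coordinate `k0`.
  have haux : ∀ (ω : Fin m → Bool) (b : Bool),
      freeAt ends (Function.update ω k0 b) k0 ↔ freeAt ends ω k0 := by
    intro ω b
    apply freeAt_congr_below
    intro k hk
    have hne : k ≠ k0 := by
      intro h
      rw [h] at hk
      exact lt_irrefl _ hk
    exact Function.update_of_ne hne b ω
  have claim2 : ∀ (ω : Fin m → Bool) (b : Bool),
      ((∃ k ∈ greedyUpTo ends (Function.update ω k0 b) m,
          ends k = (u, j) ∨ ends k = (j, u)) ∧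
        ¬ freeAt ends (Function.update ω k0 b) k0) ↔
      ((∃ k ∈ greedyUpTo ends ω m, ends k = (u, j) ∨ ends k = (j, u)) ∧
        ¬ freeAt ends ω k0) := by
    intro ω b
    constructor
    · rintro ⟨hm, hnf⟩
      have hnf' : ¬ freeAt ends ω k0 := fun h => hnf ((haux ω b).2 h)
      rw [greedy_update_of_not_free ends hnf' b m] at hm
      exact ⟨hm, hnf'⟩
    · rintro ⟨hm, hnf⟩
      refine ⟨?_, fun h => hnf ((haux ω b).1 h)⟩
      rw [greedy_update_of_not_free ends hnf b m]
      exact hm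
  calc prOf (massP p) (fun ω =>
        (∃ k ∈ greedyUpTo ends ω m, ends k = (u, j) ∨ ends k = (j, u)) ∧ ω k0 = true)
      = prOf (massP p) (fun ω =>
          ((∃ k ∈ greedyUpTo ends ω m, ends k = (u, j) ∨ ends k = (j, u)) ∧
            ¬ freeAt ends ω k0) ∧ ω k0 = true) := prOf_congr _ claim1
    _ = p k0 * prOf (massP p) (fun ω =>
          (∃ k ∈ greedyUpTo ends ω m, ends k = (u, j) ∨ ends k = (j, u)) ∧
            ¬ freeAt ends ω k0) := prOf_indep p k0 _ claim2
    _ ≤ p k0 * prOf (massP p) (fun ω =>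
          ∃ k ∈ greedyUpTo ends ω m, ends k = (u, j) ∨ ends k = (j, u)) := by
        exact mul_le_mul_of_nonneg_left
          (prOf_mono (massP_nonneg hp) (fun ω h => h.1)) (hp k0).1
    _ = prOf (massP p) (fun ω =>
            ∃ k ∈ greedyUpTo ends ω m, ends k = (u, j) ∨ ends k = (j, u))
        * prOf (massP p) (fun ω => ω k0 = true) := by
        rw [prOf_coord p k0]; ring
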